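/- arXiv:1209.0954 — 9 statements merged into one kernel-verified Lean document; each statement's English description precedes it below -/
import Mathlib

section
/- Let G act on a set Ψ with |Ψ| > N. If for every (N+1)-tuple of pairwise distinct points T and every permutation σ of {1,…,N+1}, the tuples T and σ(T) lie in the same G-orbit, then G acts N-transitively on Ψ. -/
/-!
Pad an injective `N`-tuple with a point outside its range (one exists since `|Ψ| > N`) and apply
a transposition to the padded tuple: swapping two old entries permutes the `N`-tuple, swapping
an old entry with the new one replaces it by a fresh point. Between them these moves realise
`Function.Embedding.setValue`, which turns any `N`-tuple into any other one coordinate at a time.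
-/

open MulAction Function Function.Embedding

def PermutesConfigurations (G Ψ : Type*) [Group G] [MulAction G Ψ] (n : ℕ) : Prop :=
  ∀ (T : Fin n ↪ Ψ) (σ : Equiv.Perm (Fin n)), ∃ g : G, ∀ i, g • T i = T (σ i)

section

variable {G Ψ : Type*} [Group G] [MulAction G Ψ]

theorem exists_notMem_range_of_lt_mk {N : ℕ} (hcard : (N : Cardinal) < Cardinal.mk Ψ)
    (a : Fin N → Ψ) : ∃ y, y ∉ Set.range a := by
  obtain ⟨y, hy⟩ := Cardinal.exists_notMem_of_length_lt (List.ofFn a) (by simpa using hcard)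
  exact ⟨y, by simpa using hy⟩

namespace PermutesConfigurations

variable {N : ℕ}

theorem swap_trans_mem_orbit (h : PermutesConfigurations G Ψ (N + 1))
    (hcard : (N : Cardinal) < Cardinal.mk Ψ) (a : Fin N ↪ Ψ) (i j : Fin N) :
    (Equiv.swap i j).toEmbedding.trans a ∈ orbit G a := by
  obtain ⟨z, hz⟩ := exists_notMem_range_of_lt_mk hcard a
  obtain ⟨g, hg⟩ := h (Fin.Embedding.snoc a hz) (Equiv.swap i.castSucc j.castSucc)
  refine ⟨g, Embedding.ext fun k => ?_⟩
  simpa [(Fin.castSucc_injective N).swap_apply, Fin.Embedding.snoc_castSucc] using hg k.castSucc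

theorem setValue_mem_orbit_of_notMem_range [DecidableEq Ψ]
    (h : PermutesConfigurations G Ψ (N + 1)) (a : Fin N ↪ Ψ) (i : Fin N) {y : Ψ}
    (hy : y ∉ Set.range a) : a.setValue i y ∈ orbit G a := by
  obtain ⟨g, hg⟩ := h (Fin.Embedding.snoc a hy) (Equiv.swap i.castSucc (Fin.last N))
  refine ⟨g, Embedding.ext fun k => ?_⟩
  by_cases hk : k = i
  · subst hk
    simpa [Fin.Embedding.snoc_castSucc, Fin.Embedding.snoc_last] using hg k.castSucc
  · rw [Embedding.smul_apply, setValue_eq_of_ne hk fun hak => hy ⟨k, hak⟩]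
    simpa [Fin.Embedding.snoc_castSucc, Equiv.swap_apply_of_ne_of_ne, hk,
      (Fin.castSucc_lt_last k).ne] using hg k.castSucc

theorem setValue_mem_orbit [DecidableEq Ψ] (h : PermutesConfigurations G Ψ (N + 1))
    (hcard : (N : Cardinal) < Cardinal.mk Ψ) (a : Fin N ↪ Ψ) (i : Fin N) (y : Ψ) :
    a.setValue i y ∈ orbit G a := by
  by_cases hy : y ∈ Set.range a
  · obtain ⟨j, rfl⟩ := hy
    convert h.swap_trans_mem_orbit hcard a i j using 1
    ext k
    simp only [setValue, EmbeddingLike.apply_eq_iff_eq, coeFn_mk, trans_apply,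
      Equiv.swap_apply_def]
    split_ifs <;> rfl
  · exact h.setValue_mem_orbit_of_notMem_range a i hy

theorem isMultiplyPretransitive (h : PermutesConfigurations G Ψ (N + 1))
    (hcard : (N : Cardinal) < Cardinal.mk Ψ) : IsMultiplyPretransitive G Ψ N := by
  classical
  refine ⟨fun f g => ?_⟩
  suffices ∀ s : Finset (Fin N), ∃ b ∈ orbit G f, ∀ i ∈ s, b i = g i by
    obtain ⟨b, hb, hbg⟩ := this Finset.univ
    exact mem_orbit_iff.mp ((Embedding.ext fun i => hbg i (Finset.mem_univ i)) ▸ hb)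
  intro s
  induction s using Finset.induction_on with
  | empty => exact ⟨f, mem_orbit_self f, by simp⟩
  | insert k s hks ih =>
    obtain ⟨b, hb, hbg⟩ := ih
    refine ⟨b.setValue k (g k), ?_, ?_⟩
    · exact orbit_eq_iff.mpr hb ▸ h.setValue_mem_orbit hcard b k (g k)
    · simp only [Finset.mem_insert, forall_eq_or_imp, setValue_eq, true_and]
      intro i hi
      have hik : i ≠ k := ne_of_mem_of_not_mem hi hks
      rw [setValue_eq_of_ne hik (by rw [hbg i hi]; exact g.injective.ne hik), hbg i hi]

end PermutesConfigurations

end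

/-- If `|Ψ| > N` and for every injective `(N+1)`-tuple `T` in `Ψ` and every
permutation `σ` of the indices, `T` and `σ(T)` lie in the same `G`-orbit, then
`G` acts `N`-transitively on `Ψ`. -/
theorem n_transitive_of_permuting_configurations
    {G : Type*} [Group G] {Ψ : Type*} [MulAction G Ψ] (N : ℕ)
    (hcard : (N : Cardinal) < Cardinal.mk Ψ)
    (hperm : ∀ (T : Fin (N + 1) ↪ Ψ) (σ : Equiv.Perm (Fin (N + 1))),
      ∃ g : G, ∀ i, g • T i = T (σ i)) :
    ∀ f g : Fin N ↪ Ψ, ∃ x : G, ∀ i, x • f i = g i := by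
  intro f g
  have : IsMultiplyPretransitive G Ψ N :=
    PermutesConfigurations.isMultiplyPretransitive hperm hcard
  obtain ⟨x, hx⟩ := exists_smul_eq G f g
  exact ⟨x, fun i => by rw [← Embedding.smul_apply, hx]⟩
end

section
/- Let G act on a set Ψ and suppose G is 2-transitive and contains a transposition (a permutation interchanging two points and fixing all others). Then the image of G in Sym(Ψ) is dense, i.e., G is highly transitive on Ψ. -/
/-!
Conjugating the given transposition by elements of the 2-transitive group `G` yields every
transposition, so `G` contains them all. Multiplying by transpositions, an element of `G` that
agrees with a permutation `σ` on a finite set `s` can be corrected at one further point without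
disturbing `s`; hence `G` meets every basic neighbourhood of `σ`.
-/

/-- The topology of pointwise convergence on the symmetric group of a set `Ψ`. -/
def permPointwiseTopology (Ψ : Type*) : TopologicalSpace (Equiv.Perm Ψ) :=
  letI : TopologicalSpace Ψ := ⊥
  TopologicalSpace.induced
    (fun σ : Equiv.Perm Ψ => ((σ : Ψ → Ψ), (σ.symm : Ψ → Ψ))) inferInstance

open Equiv

section SwapMem

variable {Ψ : Type*} [DecidableEq Ψ] {G : Subgroup (Perm Ψ)}

theorem swap_apply_apply_mem {g : Perm Ψ} (hg : g ∈ G) {p q : Ψ} (hpq : swap p q ∈ G) :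
    swap (g p) (g q) ∈ G := by
  rw [swap_apply_apply]
  exact G.mul_mem (G.mul_mem hg hpq) (G.inv_mem hg)

variable (hswap : ∀ p q : Ψ, p ≠ q → swap p q ∈ G)
include hswap

theorem exists_mem_eqOn_of_swap_mem (s : Finset Ψ) (σ : Perm Ψ) :
    ∃ τ ∈ G, ∀ x ∈ s, τ x = σ x := by
  induction s using Finset.induction_on with
  | empty => exact ⟨1, G.one_mem, by simp⟩
  | insert a s ha ih =>
    obtain ⟨τ, hτ, hτσ⟩ := ih
    by_cases hτa : τ a = σ a
    · exact ⟨τ, hτ, Finset.forall_mem_insert _ _ _ |>.mpr ⟨hτa, hτσ⟩⟩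
    refine ⟨swap (τ a) (σ a) * τ, G.mul_mem (hswap _ _ hτa) hτ, ?_⟩
    refine Finset.forall_mem_insert _ _ _ |>.mpr ⟨by simp, fun x hx => ?_⟩
    have hxa : x ≠ a := fun h => ha (h ▸ hx)
    rw [Perm.mul_apply, hτσ x hx, swap_apply_of_ne_of_ne]
    · rw [← hτσ x hx]
      exact τ.injective.ne hxa
    · exact σ.injective.ne hxa

theorem exists_mem_apply_eq_of_swap_mem {ι : Type*} [Finite ι] (f g : ι ↪ Ψ) :
    ∃ σ ∈ G, ∀ i, σ (f i) = g i := by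
  obtain ⟨σ, hσ⟩ := Perm.exists_extending_pair f g f.injective g.injective
  obtain ⟨τ, hτ, hτσ⟩ := exists_mem_eqOn_of_swap_mem hswap (Set.finite_range f).toFinset σ
  exact ⟨τ, hτ, fun i => (hτσ (f i) (by simp)).trans (hσ i)⟩

end SwapMem

theorem dense_of_forall_finset_exists_eqOn {Ψ : Type*} (S : Set (Perm Ψ))
    (hS : ∀ (s : Finset Ψ) (σ : Perm Ψ), ∃ τ ∈ S, ∀ x ∈ s, τ x = σ x) :
    @Dense (Perm Ψ) (permPointwiseTopology Ψ) S := by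
  classical
  let _ : TopologicalSpace Ψ := ⊥
  let _ : TopologicalSpace (Perm Ψ) := permPointwiseTopology Ψ
  rw [dense_iff_inter_open]
  rintro U hU ⟨σ, hσU⟩
  obtain ⟨V, hV, rfl⟩ := isOpen_induced_iff.mp hU
  obtain ⟨U₁, U₂, hU₁, hU₂, hσ₁, hσ₂, hVsub⟩ := isOpen_prod_iff.mp hV _ _ hσU
  obtain ⟨I, u, hu, hIsub⟩ := isOpen_pi_iff.mp hU₁ _ hσ₁
  obtain ⟨J, v, hv, hJsub⟩ := isOpen_pi_iff.mp hU₂ _ hσ₂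
  obtain ⟨τ, hτS, hτσ⟩ := hS (I ∪ J.image σ.symm) σ
  have hτ_inv : ∀ y ∈ J, τ.symm y = σ.symm y := fun y hy => by
    rw [Equiv.symm_apply_eq, hτσ _ (by simp [hy]), Equiv.apply_symm_apply]
  refine ⟨τ, hVsub ⟨hIsub fun x hx => ?_, hJsub fun y hy => ?_⟩, hτS⟩
  · simpa [hτσ x (Finset.mem_union_left _ hx)] using (hu x hx).2
  · simpa [hτ_inv y hy] using (hv y hy).2

/-- If a subgroup `G ≤ Sym Ψ` is 2-transitive and contains a transposition, then
`G` is dense in `Sym Ψ`, i.e. highly transitive on `Ψ`. -/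
theorem dense_of_two_transitive_with_transposition (Ψ : Type*) [DecidableEq Ψ]
    (G : Subgroup (Equiv.Perm Ψ))
    (htransp : ∃ p q : Ψ, p ≠ q ∧ Equiv.swap p q ∈ G)
    (h2 : ∀ p q p' q' : Ψ, p ≠ q → p' ≠ q' →
      ∃ g ∈ G, g p = p' ∧ g q = q') :
    @Dense (Equiv.Perm Ψ) (permPointwiseTopology Ψ) (G : Set (Equiv.Perm Ψ)) ∧
      (∀ (N : ℕ) (f g : Fin N ↪ Ψ), ∃ σ ∈ G, ∀ i, σ (f i) = g i) := by
  obtain ⟨p, q, hpq, hswap⟩ := htransp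
  have hG : ∀ p' q' : Ψ, p' ≠ q' → swap p' q' ∈ G := fun p' q' hpq' => by
    obtain ⟨g, hg, rfl, rfl⟩ := h2 p q p' q' hpq hpq'
    exact swap_apply_apply_mem hg hswap
  exact ⟨dense_of_forall_finset_exists_eqOn _ (exists_mem_eqOn_of_swap_mem hG),
    fun _ => exists_mem_apply_eq_of_swap_mem hG⟩
end

section
/- The subgroup of Sym(ℤ) generated by the transposition (0 1) and the shift n ↦ n+2 is transitive on ℤ but not 2-transitive; in fact the orbit of the pair (0,1) is {(a, a+(−1)^a) : a ∈ ℤ}. -/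
/-!
Let `σ` be the involution `a ↦ a + (-1)^a`, which exchanges `2k` and `2k + 1`. Both generators
commute with `σ`: the shift by `2` preserves parity, and `(0 1)` is one of the transpositions
making up `σ`. Hence every `g ∈ G` commutes with `σ`, so `g 1 = g (σ 0) = σ (g 0)` and the orbit
of `(0, 1)` lies on the graph of `σ`. Conversely, the even shifts and their composites with
`(0 1)` move `(0, 1)` to every pair `(a, σ a)`; in particular `G` is transitive, but it cannot
send `(0, 1)` to `(0, 2)`.
-/

namespace ShiftSwap

open Equiv

lemma negOnePow_negOnePow (a : ℤ) : (a.negOnePow : ℤ).negOnePow = -1 := by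
  rcases Int.isUnit_iff.mp a.negOnePow.isUnit with h | h <;> rw [h] <;> rfl

lemma add_negOnePow_involutive : Function.Involutive fun a : ℤ ↦ a + a.negOnePow := by
  intro a
  simp only [Int.negOnePow_add, negOnePow_negOnePow, mul_neg_one, Units.val_neg]
  ring

def pairSwap : Perm ℤ := add_negOnePow_involutive.toPerm

lemma pairSwap_apply (a : ℤ) : pairSwap a = a + a.negOnePow := rfl

lemma pairSwap_zero : pairSwap 0 = 1 := rfl

lemma pairSwap_one : pairSwap 1 = 0 := rfl

lemma commute_swap_zero_one_pairSwap : Commute (swap 0 1) pairSwap := by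
  refine (mul_inv_eq_iff_eq_mul.mp ?_).symm
  rw [← swap_apply_apply, pairSwap_zero, pairSwap_one, swap_comm]

lemma commute_addRight_two_pairSwap : Commute (Equiv.addRight 2) pairSwap :=
  Perm.ext fun a ↦ by
    simp only [Perm.mul_apply, coe_addRight, pairSwap_apply, Int.negOnePow_add,
      Int.negOnePow_even 2 even_two, mul_one]
    ring

def shiftSwapGroup : Subgroup (Perm ℤ) := Subgroup.closure {swap 0 1, Equiv.addRight 2}

lemma shiftSwapGroup_le_centralizer_pairSwap :
    shiftSwapGroup ≤ Subgroup.centralizer {pairSwap} := by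
  rw [shiftSwapGroup, Subgroup.closure_le]
  rintro g (rfl | rfl) <;> rw [SetLike.mem_coe, Subgroup.mem_centralizer_singleton_iff]
  · exact commute_swap_zero_one_pairSwap.eq
  · exact commute_addRight_two_pairSwap.eq

lemma apply_one_eq_pairSwap_apply_zero {g : Perm ℤ} (hg : g ∈ shiftSwapGroup) :
    g 1 = pairSwap (g 0) :=
  Perm.ext_iff.mp
    (Subgroup.mem_centralizer_singleton_iff.mp (shiftSwapGroup_le_centralizer_pairSwap hg)) 0

lemma addRight_two_mul_mem_shiftSwapGroup (k : ℤ) :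
    Equiv.addRight (2 * k) ∈ shiftSwapGroup := by
  have h : Equiv.addRight (2 : ℤ) ∈ shiftSwapGroup := Subgroup.subset_closure (by simp)
  simpa [mul_comm] using zpow_mem h k

lemma exists_mem_shiftSwapGroup_apply_zero_apply_one (a : ℤ) :
    ∃ g ∈ shiftSwapGroup, g 0 = a ∧ g 1 = pairSwap a := by
  obtain ⟨k, rfl | rfl⟩ := Int.even_or_odd' a
  · exact ⟨Equiv.addRight (2 * k), addRight_two_mul_mem_shiftSwapGroup k, by simp,
      by simp [pairSwap_apply, add_comm]⟩
  · have hswap : swap (0 : ℤ) 1 ∈ shiftSwapGroup := Subgroup.subset_closure (by simp)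
    refine ⟨Equiv.addRight (2 * k) * swap 0 1,
      mul_mem (addRight_two_mul_mem_shiftSwapGroup k) hswap, by simp [add_comm], ?_⟩
    simp [pairSwap_apply]

lemma exists_mem_shiftSwapGroup_apply_eq (a b : ℤ) : ∃ g ∈ shiftSwapGroup, g a = b := by
  obtain ⟨f, hf, hfa, -⟩ := exists_mem_shiftSwapGroup_apply_zero_apply_one a
  obtain ⟨g, hg, hgb, -⟩ := exists_mem_shiftSwapGroup_apply_zero_apply_one b
  refine ⟨g * f⁻¹, mul_mem hg (inv_mem hf), ?_⟩
  rw [Perm.mul_apply, Perm.inv_eq_iff_eq.mpr hfa.symm, hgb]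

lemma orbit_zero_one_eq_graph_pairSwap :
    {p : ℤ × ℤ | ∃ g ∈ shiftSwapGroup, (g 0, g 1) = p} = {p | ∃ a, p = (a, pairSwap a)} := by
  ext p
  constructor
  · rintro ⟨g, hg, rfl⟩
    exact ⟨g 0, by rw [apply_one_eq_pairSwap_apply_zero hg]⟩
  · rintro ⟨a, rfl⟩
    obtain ⟨g, hg, h0, h1⟩ := exists_mem_shiftSwapGroup_apply_zero_apply_one a
    exact ⟨g, hg, by rw [h0, h1]⟩

end ShiftSwap

open ShiftSwap in
/-- The subgroup of `Sym ℤ` generated by the transposition `(0 1)` and the shift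
`n ↦ n + 2` is transitive on `ℤ`, the orbit of the pair `(0,1)` is
`{(a, a + (−1)^a) | a ∈ ℤ}`, and the subgroup is not 2-transitive. -/
theorem shift_and_transposition_not_two_transitive :
    ∀ G : Subgroup (Equiv.Perm ℤ),
      G = Subgroup.closure {Equiv.swap (0 : ℤ) 1, Equiv.addRight (2 : ℤ)} →
      (∀ a b : ℤ, ∃ g ∈ G, g a = b) ∧
      ({p : ℤ × ℤ | ∃ g ∈ G, (g 0, g 1) = p} =
        {p : ℤ × ℤ | ∃ a : ℤ, p = (a, a + (((-1 : ℤˣ) ^ a : ℤˣ) : ℤ))}) ∧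
      ¬ (∀ p q p' q' : ℤ, p ≠ q → p' ≠ q' → ∃ g ∈ G, g p = p' ∧ g q = q') := by
  rintro G rfl
  refine ⟨exists_mem_shiftSwapGroup_apply_eq, orbit_zero_one_eq_graph_pairSwap, fun h ↦ ?_⟩
  obtain ⟨g, hg, h0, h2⟩ := h 0 1 0 2 zero_ne_one two_ne_zero.symm
  have h21 := apply_one_eq_pairSwap_apply_zero hg
  rw [h0, h2, pairSwap_zero] at h21
  omega
end

section
/- Let K|k be a separable field extension of degree > 2. Then the map x ↦ 1/x on the projective space P_k(K) = K^×/k^× is not a collineation, i.e., it sends some triple of collinear points to a non-collinear triple. -/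
/-!
A separable extension of degree `> 2` contains, by the primitive element theorem applied to a
finite subextension of degree `> 2`, an element `γ` of degree `> 2`. The points `1, γ, 1 + γ` are
collinear, but a linear relation among their inverses `1, γ⁻¹, (1 + γ)⁻¹` becomes, after
multiplying by `γ (1 + γ)`, a relation among `1, γ, γ²`, which must be trivial.
-/

open Module IntermediateField

section Rank

variable {k V : Type*} [DivisionRing k] [AddCommGroup V] [Module k V]

theorem rank_span_triple_add_le_two (x y : V) :
    Module.rank k (Submodule.span k {x, y, x + y}) ≤ 2 := by
  have hxy : x + y ∈ Submodule.span k {x, y} :=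
    add_mem (Submodule.subset_span (by simp)) (Submodule.subset_span (by simp))
  rw [show ({x, y, x + y} : Set V) = insert (x + y) {x, y} by ext; simp; tauto,
    Submodule.span_insert_eq_span hxy]
  refine (rank_span_le _).trans (Cardinal.mk_insert_le.trans ?_)
  simp [one_add_one_eq_two]

theorem not_rank_span_triple_le_two {a b c : V} (h : LinearIndependent k ![a, b, c]) :
    ¬ Module.rank k (Submodule.span k {a, b, c}) ≤ 2 := by
  have hrange : Set.range ![a, b, c] = {a, b, c} := by
    simp only [Matrix.range_cons, Matrix.range_empty, Set.union_empty, Set.singleton_union]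
  have hcard : Cardinal.mk (Set.range ![a, b, c]) = 3 := by
    simpa using Cardinal.mk_range_eq_of_injective h.injective
  rw [← hrange, rank_span h, hcard]
  norm_num

end Rank

section Field

variable {k K : Type*} [Field k] [Field K] [Algebra k K]

theorem exists_finiteDimensional_intermediateField_lt_finrank [Algebra.IsAlgebraic k K] {n : ℕ}
    (h : n < Module.rank k K) :
    ∃ L : IntermediateField k K, FiniteDimensional k L ∧ n < finrank k L := by
  obtain ⟨s, hcard, hs⟩ := le_rank_iff_exists_linearIndependent_finset.1
    (by exact_mod_cast Cardinal.natCast_add_one_le_iff.2 h : ((n + 1 : ℕ) : Cardinal) ≤ _)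
  have hfin : FiniteDimensional k (adjoin k (s : Set K)) :=
    finiteDimensional_adjoin fun x _ ↦ Algebra.IsIntegral.isIntegral x
  refine ⟨_, hfin, ?_⟩
  have hsL : LinearIndependent k
      fun x : (s : Set K) ↦ (⟨x, subset_adjoin k _ x.2⟩ : adjoin k (s : Set K)) :=
    .of_comp (adjoin k (s : Set K)).val.toLinearMap hs
  simpa [hcard] using hsL.fintype_card_le_finrank

theorem exists_lt_natDegree_minpoly [Algebra.IsSeparable k K] {n : ℕ}
    (h : n < Module.rank k K) : ∃ γ : K, n < (minpoly k γ).natDegree := by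
  obtain ⟨L, hL, hn⟩ := exists_finiteDimensional_intermediateField_lt_finrank h
  have : Algebra.IsSeparable k L := Algebra.isSeparable_tower_bot_of_isSeparable k L K
  obtain ⟨α, hα⟩ := Field.exists_primitive_element k L
  refine ⟨α, ?_⟩
  rwa [← IntermediateField.minpoly_eq, (Field.primitive_element_iff_minpoly_natDegree_eq k α).1 hα]

theorem algebraMap_add_ne_zero_of_one_lt_natDegree {γ : K} (hγ : 1 < (minpoly k γ).natDegree)
    (a : k) : algebraMap k K a + γ ≠ 0 := by
  intro h
  have : γ ∈ (algebraMap k K).range := ⟨-a, by rw [map_neg]; linear_combination -h⟩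
  exact hγ.ne' (minpoly.natDegree_eq_one_iff.2 this)

theorem linearIndependent_one_inv_inv_one_add {γ : K} (hγ : 2 < (minpoly k γ).natDegree) :
    LinearIndependent k ![1, γ⁻¹, (1 + γ)⁻¹] := by
  have hpow : LinearIndependent k ![1, γ, γ ^ 2] := by
    convert (linearIndependent_pow γ).comp _ (Fin.castLE_injective hγ) using 1
    ext i; fin_cases i <;> simp
  have hγ0 : γ ≠ 0 := by
    simpa using algebraMap_add_ne_zero_of_one_lt_natDegree (γ := γ) (by omega) (0 : k)
  have hγ1 : 1 + γ ≠ 0 := by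
    simpa using algebraMap_add_ne_zero_of_one_lt_natDegree (γ := γ) (by omega) (1 : k)
  rw [Fintype.linearIndependent_iff] at hpow ⊢
  intro g hg
  have hcleared := hpow ![g 1, g 0 + g 1 + g 2, g 0] (by
    simp only [Fin.sum_univ_three, Matrix.cons_val, Algebra.smul_def, map_add, mul_one] at hg ⊢
    field_simp at hg
    linear_combination hg)
  have hb : g 1 = 0 := hcleared 0
  have hsum : g 0 + g 1 + g 2 = 0 := hcleared 1
  have ha : g 0 = 0 := hcleared 2
  intro i
  fin_cases i
  · exact ha
  · exact hb
  · show g 2 = 0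
    linear_combination hsum - ha - hb

end Field

/-- Let `K | k` be a separable field extension of degree `> 2`. Then the map
`x ↦ 1/x` on the projective space `ℙ_k(K) = K^× / k^×` is not a collineation:
it sends some triple of collinear points (nonzero vectors spanning a subspace of
dimension ≤ 2) to a non-collinear triple. -/
theorem inverse_map_not_collineation (k K : Type*) [Field k] [Field K]
    [Algebra k K] [Algebra.IsSeparable k K] (hdeg : 2 < Module.rank k K) :
    ∃ x y z : K, x ≠ 0 ∧ y ≠ 0 ∧ z ≠ 0 ∧
      Module.rank k (Submodule.span k {x, y, z}) ≤ 2 ∧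
      ¬ Module.rank k (Submodule.span k {x⁻¹, y⁻¹, z⁻¹}) ≤ 2 := by
  obtain ⟨γ, hγ⟩ := exists_lt_natDegree_minpoly (n := 2) (mod_cast hdeg)
  have hγ0 : γ ≠ 0 := by
    simpa using algebraMap_add_ne_zero_of_one_lt_natDegree (γ := γ) (by omega) (0 : k)
  have hγ1 : 1 + γ ≠ 0 := by
    simpa using algebraMap_add_ne_zero_of_one_lt_natDegree (γ := γ) (by omega) (1 : k)
  refine ⟨1, γ, 1 + γ, one_ne_zero, hγ0, hγ1, rank_span_triple_add_le_two 1 γ, ?_⟩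
  rw [inv_one]
  exact not_rank_span_triple_le_two (linearIndependent_one_inv_inv_one_add hγ)
end

section
/- Let V be a vector space over a finite field k, h̃ an injective self-map of V∖{0}, J ⊂ V a finite set such that both J and h̃(J) are linearly independent, and P₀ ⊂ P₁ ⊂ P₂ ⊂ … a flag of subspaces with J ⊂ P₀, dim Pᵢ = |J| + i, and ⋃ᵢ Pᵢ = V. Then there exist vectors eᵢ ∈ Pᵢ∖P_{i−1} such that J ∪ {e₁, e₂, …} is a basis of V and its image under h̃ consists of linearly independent vectors. -/
/-!
The vectors `e₁, e₂, …` are chosen greedily. At step `n` the set `Sₙ = J ∪ {e₁, …, eₙ}` is a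
basis of `Pₙ`, and we need `e ∈ P_{n+1} ∖ Pₙ` with `h e ∉ span (h '' Sₙ)`. Such an `e` exists by
counting: with `q = |k|` and `d = dim Pₙ`, the set `P_{n+1} ∖ Pₙ` has `(q - 1) qᵈ ≥ qᵈ` elements,
all nonzero, while `span (h '' Sₙ) ∖ {0}` has fewer than `qᵈ`, so the injection `h` cannot map
the former into the latter. Independence of `Sₙ` and of `h '' Sₙ`, and `span Sₙ = Pₙ`, then
pass to the increasing union of the `Sₙ`.
-/

open Module Submodule Set

section

variable {k V : Type*} [Field k] [AddCommGroup V] [Module k V]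

theorem Submodule.ncard_eq_pow_finrank (Q : Submodule k V) [FiniteDimensional k Q] :
    (Q : Set V).ncard = Nat.card k ^ finrank k Q := by
  rw [← Nat.card_coe_set_eq]
  exact Module.natCard_eq_pow_finrank

theorem Submodule.ncard_le_ncard_sdiff_of_finrank_eq_succ [Finite k] {Q Q' : Submodule k V}
    [FiniteDimensional k Q'] (hle : Q ≤ Q') (hQ' : finrank k Q' = finrank k Q + 1) :
    (Q : Set V).ncard ≤ ((Q' : Set V) \ Q).ncard := by
  have : FiniteDimensional k Q := Submodule.finiteDimensional_of_le hle
  have : Finite Q := Module.finite_of_finite k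
  have hq : 2 ≤ Nat.card k := Finite.one_lt_card
  rw [ncard_sdiff hle, Q.ncard_eq_pow_finrank, Q'.ncard_eq_pow_finrank, hQ', pow_succ]
  have : Nat.card k ^ finrank k Q * 2 ≤ Nat.card k ^ finrank k Q * Nat.card k :=
    Nat.mul_le_mul_left _ hq
  omega

theorem exists_mem_notMem_apply_notMem [Finite k] {h : V → V} (hmap : ∀ v, v ≠ 0 → h v ≠ 0)
    (hinj : InjOn h {v | v ≠ 0}) {Q Q' W : Submodule k V} [FiniteDimensional k Q']
    [FiniteDimensional k W] (hle : Q ≤ Q') (hQ' : finrank k Q' = finrank k Q + 1)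
    (hW : finrank k W ≤ finrank k Q) :
    ∃ v ∈ Q', v ∉ Q ∧ h v ∉ W := by
  by_contra! hcon
  have : FiniteDimensional k Q := Submodule.finiteDimensional_of_le hle
  have : Finite W := Module.finite_of_finite k
  have hne : ∀ v ∈ (Q' : Set V) \ Q, v ≠ 0 := fun v hv h0 => hv.2 (h0 ▸ Q.zero_mem)
  have hmaps : MapsTo h ((Q' : Set V) \ Q) ((W : Set V) \ {0}) :=
    fun v hv => ⟨hcon v hv.1 hv.2, hmap v (hne v hv)⟩
  have hWQ : (W : Set V).ncard ≤ (Q : Set V).ncard := by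
    rw [W.ncard_eq_pow_finrank, Q.ncard_eq_pow_finrank]
    exact Nat.pow_le_pow_right Finite.card_pos hW
  refine lt_irrefl (Q : Set V).ncard ?_
  calc (Q : Set V).ncard ≤ ((Q' : Set V) \ Q).ncard :=
        Submodule.ncard_le_ncard_sdiff_of_finrank_eq_succ hle hQ'
    _ ≤ ((W : Set V) \ {0}).ncard := ncard_le_ncard_of_injOn h hmaps (hinj.mono hne) (toFinite _)
    _ < (W : Set V).ncard := ncard_sdiff_singleton_lt_of_mem W.zero_mem
    _ ≤ (Q : Set V).ncard := hWQ

theorem Set.iUnion_eq_union_range_of_succ_eq_insert {α : Type*} {S : ℕ → Set α} {f : ℕ → α}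
    (hS : ∀ n, S (n + 1) = insert (f n) (S n)) : ⋃ n, S n = S 0 ∪ range f := by
  refine Subset.antisymm (iUnion_subset fun n => ?_) (union_subset (subset_iUnion S 0) ?_)
  · induction n with
    | zero => exact subset_union_left
    | succ n ih => exact hS n ▸ insert_subset (Or.inr (mem_range_self n)) ih
  · rintro _ ⟨n, rfl⟩
    exact mem_iUnion_of_mem (n + 1) (hS n ▸ mem_insert _ _)

section GreedyExtension

variable {h : V → V} {P : ℕ → Submodule k V} {J : Finset V}

variable (h P) in
noncomputable def nextVec (n : ℕ) (S : Finset V) : V :=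
  Classical.epsilon fun v => v ∈ P (n + 1) ∧ v ∉ P n ∧ h v ∉ span k (h '' S)

variable [Finite k] (hmap : ∀ v, v ≠ 0 → h v ≠ 0) (hinj : InjOn h {v | v ≠ 0})
  (hmono : Monotone P) (hJP : (J : Set V) ⊆ P 0) (hdim : ∀ i, finrank k (P i) = J.card + i)
include hmap hinj hmono hdim

theorem nextVec_spec {n : ℕ} {S : Finset V} (hS : S.card ≤ J.card + n) :
    nextVec h P n S ∈ P (n + 1) ∧ nextVec h P n S ∉ P n ∧
      h (nextVec h P n S) ∉ span k (h '' S) := by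
  classical
  have : FiniteDimensional k (P (n + 1)) := .of_finrank_pos (by rw [hdim]; omega)
  have : FiniteDimensional k (span k (h '' S)) := .span_of_finite k (S.finite_toSet.image h)
  obtain ⟨v, hv⟩ := exists_mem_notMem_apply_notMem hmap hinj (hmono n.le_succ)
    (by rw [hdim, hdim]; rfl) (W := span k (h '' S)) <| by
      rw [← Finset.coe_image, hdim]
      exact (finrank_span_finset_le_card _).trans (Finset.card_image_le.trans hS)
  exact Classical.epsilon_spec (p := fun v => v ∈ P (n + 1) ∧ v ∉ P n ∧ h v ∉ span k (h '' S))
    ⟨v, hv⟩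

variable [DecidableEq V]

variable (h P J) in
noncomputable def partialBasis : ℕ → Finset V
  | 0 => J
  | n + 1 => insert (nextVec h P n (partialBasis n)) (partialBasis n)

omit [Finite k] hmap hinj hmono hdim in
theorem coe_partialBasis_succ (n : ℕ) :
    (partialBasis h P J (n + 1) : Set V) =
      insert (nextVec h P n (partialBasis h P J n)) (partialBasis h P J n : Set V) :=
  Finset.coe_insert _ _

include hJP in
theorem partialBasis_subset_and_card (n : ℕ) :
    (partialBasis h P J n : Set V) ⊆ P n ∧ (partialBasis h P J n).card = J.card + n := by
  induction n with
  | zero => exact ⟨hJP, rfl⟩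
  | succ n ih =>
    obtain ⟨hv, hvn, -⟩ := nextVec_spec hmap hinj hmono hdim ih.2.le
    refine ⟨?_, ?_⟩
    · rw [coe_partialBasis_succ]
      exact insert_subset hv (ih.1.trans (hmono n.le_succ))
    · rw [partialBasis, Finset.card_insert_of_notMem, ih.2]
      · rfl
      · exact fun hmem => hvn (ih.1 hmem)

include hJP in
theorem nextVec_partialBasis_spec (n : ℕ) :
    nextVec h P n (partialBasis h P J n) ∈ P (n + 1) ∧ nextVec h P n (partialBasis h P J n) ∉ P n ∧
      h (nextVec h P n (partialBasis h P J n)) ∉ span k (h '' partialBasis h P J n) :=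
  nextVec_spec hmap hinj hmono hdim (partialBasis_subset_and_card hmap hinj hmono hJP hdim n).2.le

include hJP in
theorem linearIndepOn_partialBasis (hJ : LinearIndepOn k id (J : Set V)) (n : ℕ) :
    LinearIndepOn k id (partialBasis h P J n : Set V) := by
  induction n with
  | zero => exact hJ
  | succ n ih =>
    rw [coe_partialBasis_succ]
    refine ih.id_insert fun hmem => (nextVec_partialBasis_spec hmap hinj hmono hJP hdim n).2.1 ?_
    exact span_le.mpr (partialBasis_subset_and_card hmap hinj hmono hJP hdim n).1 hmem

include hJP in
theorem linearIndepOn_image_partialBasis (hhJ : LinearIndepOn k id (h '' J)) (n : ℕ) :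
    LinearIndepOn k id (h '' partialBasis h P J n) := by
  induction n with
  | zero => exact hhJ
  | succ n ih =>
    rw [coe_partialBasis_succ, image_insert_eq]
    exact ih.id_insert (nextVec_partialBasis_spec hmap hinj hmono hJP hdim n).2.2

include hJP in
theorem span_partialBasis (hJ : LinearIndepOn k id (J : Set V)) (n : ℕ) :
    span k (partialBasis h P J n : Set V) = P n := by
  obtain ⟨hsub, hcard⟩ := partialBasis_subset_and_card hmap hinj hmono hJP hdim n
  have : FiniteDimensional k (P (n + 1)) := .of_finrank_pos (by rw [hdim]; omega)
  have : FiniteDimensional k (P n) := finiteDimensional_of_le (hmono n.le_succ)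
  refine eq_of_le_of_finrank_eq (span_le.mpr hsub) ?_
  rw [finrank_span_finset_eq_card (linearIndepOn_partialBasis hmap hinj hmono hJP hdim hJ n),
    hcard, hdim]

omit [Finite k] hmap hinj hmono hdim in
theorem monotone_partialBasis : Monotone fun n => (partialBasis h P J n : Set V) :=
  monotone_nat_of_le_succ fun n => by
    rw [coe_partialBasis_succ]
    exact subset_insert _ _

omit [Finite k] hmap hinj hmono hdim in
theorem iUnion_partialBasis :
    ⋃ n, (partialBasis h P J n : Set V) =
      (J : Set V) ∪ range fun n => nextVec h P n (partialBasis h P J n) :=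
  iUnion_eq_union_range_of_succ_eq_insert coe_partialBasis_succ

end GreedyExtension

end

/-- Let `V` be a vector space over a finite field `k`, `h` an injective self-map of
`V ∖ {0}`, `J ⊂ V` a finite set such that both `J` and `h(J)` are linearly
independent, and `P₀ ⊂ P₁ ⊂ …` an exhausting flag of subspaces with `J ⊆ P₀` and
`dim Pᵢ = |J| + i`. Then there exist vectors `eᵢ ∈ Pᵢ ∖ P_{i−1}` (for `i ≥ 1`) such
that `J ∪ {e₁, e₂, …}` is a basis of `V` whose image under `h` is linearly
independent. -/
theorem exists_basis_with_independent_image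
    (k : Type*) [Field k] [Finite k] (V : Type*) [AddCommGroup V] [Module k V]
    (h : V → V) (hmap : ∀ v : V, v ≠ 0 → h v ≠ 0)
    (hinj : Set.InjOn h {v : V | v ≠ 0})
    (J : Finset V) (hJ : LinearIndependent k (Subtype.val : ↥(J : Set V) → V))
    (hhJ : LinearIndependent k (Subtype.val : ↥(h '' (J : Set V)) → V))
    (P : ℕ → Submodule k V) (hmono : Monotone P) (hJP : (J : Set V) ⊆ P 0)
    (hdim : ∀ i, Module.finrank k (P i) = J.card + i)
    (hexh : ⨆ i, P i = ⊤) :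
    ∃ e : ℕ → V, (∀ i : ℕ, e (i + 1) ∈ P (i + 1) ∧ e (i + 1) ∉ P i) ∧
      LinearIndependent k
        (Subtype.val : ↥((J : Set V) ∪ Set.range (fun i : ℕ => e (i + 1)) : Set V) → V) ∧
      Submodule.span k ((J : Set V) ∪ Set.range (fun i : ℕ => e (i + 1))) = ⊤ ∧
      LinearIndependent k
        (Subtype.val : ↥
          (h '' ((J : Set V) ∪ Set.range (fun i : ℕ => e (i + 1))) : Set V) → V) := by
  classical
  -- `e 0` is never used: `e (n + 1)` is the vector added at step `n`.
  refine ⟨fun n => nextVec h P (n - 1) (partialBasis h P J (n - 1)), fun i =>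
    (nextVec_partialBasis_spec hmap hinj hmono hJP hdim i).imp_right And.left, ?_⟩
  show LinearIndepOn k id _ ∧ _ ∧ LinearIndepOn k id _
  simp only [Nat.add_sub_cancel]
  rw [← iUnion_partialBasis]
  refine ⟨?_, ?_, ?_⟩
  · exact linearIndepOn_iUnion_of_directed monotone_partialBasis.directed_le
      (linearIndepOn_partialBasis hmap hinj hmono hJP hdim hJ)
  · rw [span_iUnion, ← hexh]
    exact iSup_congr (span_partialBasis hmap hinj hmono hJP hdim hJ)
  · rw [image_iUnion]
    exact linearIndepOn_iUnion_of_directed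
      (monotone_image.comp monotone_partialBasis).directed_le
      (linearIndepOn_image_partialBasis hmap hinj hmono hJP hdim hhJ)
end

section
/- Let V be an infinite-dimensional 𝔽₂-vector space with basis B, let n ≥ 2 be even, and call a subset of V n-closed if it contains the sum of any n of its linearly independent elements. Then the minimal n-closed subset of V containing all one-element sums of B (i.e., B itself) is V∖{0}. -/
/-!
Write `b_s := ∑ i ∈ s, b i` for a finite set `s` of indices; every nonzero vector is some `b_s`
with `s ≠ ∅`. If `b_s ∈ S`, `#E = n - 1` and `s ⊄ E`, then `b_s` together with the `b i`,
`i ∈ E`, is linearly independent, so `n`-closedness gives `b_s + b_E = b_{s ∆ E} ∈ S`.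
As the basis is infinite, `E` may have any `a` of its elements inside a given `t` and the other
`d = n - 1 - a` outside, so all `b_s` with `#s = m₀` lying in `S` forces `b_t ∈ S` whenever
`#t + d = m₀ + a` and `a < #t`. Starting from the singletons, the moves `m ↦ m + n - 1 ↦ m + 2`
reach every odd size; an even size `m` is then reached from the size `m + n - 1`, which is odd
because `n` is even.
-/

/-- A subset `S` of an `𝔽₂`-vector space is `n`-closed if it contains the sum of any
`n` linearly independent elements of `S`. -/
def NClosed {V : Type*} [AddCommGroup V] [Module (ZMod 2) V] (n : ℕ) (S : Set V) : Prop :=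
  ∀ f : Fin n → V, (∀ i, f i ∈ S) → LinearIndependent (ZMod 2) f → (∑ i, f i) ∈ S

open Finset
open scoped symmDiff

theorem LinearIndependent.sum_ne_zero {ι R M : Type*} [Ring R] [Nontrivial R] [AddCommGroup M]
    [Module R M] [Fintype ι] [Nonempty ι] {v : ι → M} (hv : LinearIndependent R v) :
    ∑ i, v i ≠ 0 := fun h ↦
  one_ne_zero <| Fintype.linearIndependent_iff.mp hv (fun _ ↦ 1) (by simpa using h)
    (Classical.arbitrary ι)

theorem Module.Basis.sum_mem_span_image_iff {ι R M : Type*} [Semiring R] [Nontrivial R]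
    [AddCommMonoid M] [Module R M] [DecidableEq ι] (b : Module.Basis ι R M) {s E : Finset ι} :
    ∑ i ∈ s, b i ∈ Submodule.span R (b '' E) ↔ s ⊆ E := by
  rw [b.mem_span_image]
  have : (b.repr (∑ i ∈ s, b i)).support = s := by
    ext j
    simp [map_sum, Finsupp.finsetSum_apply, Finsupp.single_apply]
  rw [this, Finset.coe_subset]

theorem Finset.exists_card_symmDiff {ι : Type*} [Infinite ι] [DecidableEq ι] (t : Finset ι)
    {a d : ℕ} (ha : a < #t) : ∃ E : Finset ι, #E = a + d ∧ ¬ t ⊆ E ∧ #(t ∆ E) + a = #t + d := by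
  obtain ⟨A, hAt, hA⟩ := exists_subset_card_eq ha.le
  obtain ⟨u, htu, hu⟩ := Infinite.exists_superset_card_eq t (#t + d) le_self_add
  have hB : #(t \ A) = #t - a := by rw [card_sdiff_of_subset hAt, hA]
  refine ⟨u \ (t \ A), ?_, ?_, ?_⟩
  · rw [card_sdiff_of_subset (sdiff_subset.trans htu), hB]
    omega
  · intro h
    obtain ⟨x, hx⟩ : (t \ A).Nonempty := by rw [← card_pos, hB]; omega
    exact (mem_sdiff.mp (h (mem_sdiff.mp hx).1)).2 hx
  · have : t ∆ (u \ (t \ A)) = u \ A := by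
      ext x
      have := @hAt x
      have := @htu x
      simp only [mem_symmDiff, mem_sdiff]
      tauto
    rw [this, card_sdiff_of_subset (hAt.trans htu)]
    omega

section ZModTwo

variable {V : Type*} [AddCommGroup V] [Module (ZMod 2) V]

theorem ZModModule.sum_symmDiff {ι : Type*} [DecidableEq ι] (s t : Finset ι)
    (f : ι → V) : ∑ i ∈ s ∆ t, f i = ∑ i ∈ s, f i + ∑ i ∈ t, f i := by
  rw [← sum_inter_add_sum_sdiff s t, ← sum_inter_add_sum_sdiff t s, inter_comm t s,
    add_comm (∑ i ∈ s ∩ t, f i), ZModModule.add_add_add_cancel, Finset.symmDiff_def,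
    sum_union disjoint_sdiff_sdiff]

theorem Module.Basis.sum_support_repr {ι : Type*} (b : Module.Basis ι (ZMod 2) V) (v : V) :
    ∑ i ∈ (b.repr v).support, b i = v := by
  conv_rhs => rw [← b.linearCombination_repr v]
  rw [Finsupp.linearCombination_apply, Finsupp.sum]
  refine sum_congr rfl fun i hi ↦ ?_
  rw [(by decide : ∀ a : ZMod 2, a ≠ 0 → a = 1) _ (Finsupp.mem_support_iff.mp hi), one_smul]

theorem nClosed_setOf_ne_zero {n : ℕ} (hn : n ≠ 0) : NClosed n {v : V | v ≠ 0} := by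
  have : NeZero n := ⟨hn⟩
  exact fun f _ hf ↦ hf.sum_ne_zero

def SumsOfCardMem {ι : Type*} (b : ι → V) (S : Set V) (m : ℕ) : Prop :=
  ∀ s : Finset ι, #s = m → ∑ i ∈ s, b i ∈ S

namespace NClosed

variable {n : ℕ} {S : Set V}

theorem sum_mem_of_card_eq (hS : NClosed n S) {κ : Type*} [Fintype κ]
    (hκ : Fintype.card κ = n) {f : κ → V} (hfS : ∀ i, f i ∈ S) (hf : LinearIndependent (ZMod 2) f) :
    ∑ i, f i ∈ S := by
  let e := (Fintype.equivFinOfCardEq hκ).symm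
  rw [← e.sum_comp]
  exact hS (f ∘ e) (fun i ↦ hfS (e i)) ((linearIndependent_equiv e).mpr hf)

variable {ι : Type*} [DecidableEq ι] {b : Module.Basis ι (ZMod 2) V}

theorem sum_symmDiff_mem (hS : NClosed n S) (hbS : Set.range b ⊆ S) {s E : Finset ι}
    (hE : #E + 1 = n) (hsE : ¬ s ⊆ E) (hs : ∑ i ∈ s, b i ∈ S) :
    ∑ i ∈ s ∆ E, b i ∈ S := by
  have hli : LinearIndependent (ZMod 2)
      (fun o ↦ Option.casesOn' o (∑ i ∈ s, b i) (fun i : E ↦ b i) : Option E → V) := by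
    refine (b.linearIndependent.comp _ Subtype.val_injective).option ?_
    rwa [Set.range_comp, Subtype.range_coe, b.sum_mem_span_image_iff]
  have := hS.sum_mem_of_card_eq (by simpa using hE) (fun o ↦ ?_) hli
  · simp only [Fintype.sum_option, Option.casesOn'_none, Option.casesOn'_some] at this
    rwa [sum_coe_sort E b, ← ZModModule.sum_symmDiff] at this
  · cases o
    · exact hs
    · exact hbS ⟨_, rfl⟩

variable [Infinite ι]

theorem sumsOfCardMem_of_add_eq (hS : NClosed n S) (hbS : Set.range b ⊆ S) {a d m₀ m : ℕ}
    (hn : a + d + 1 = n) (ha : a < m) (hm : m + d = m₀ + a) (h₀ : SumsOfCardMem b S m₀) :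
    SumsOfCardMem b S m := by
  rintro t rfl
  obtain ⟨E, hE, htE, hcard⟩ := t.exists_card_symmDiff (d := d) ha
  have hsE : ¬ t ∆ E ⊆ E := fun h ↦ htE fun x hx ↦ by
    by_contra hxE
    exact hxE (h (mem_symmDiff.mpr (Or.inl ⟨hx, hxE⟩)))
  simpa only [symmDiff_symmDiff_cancel_right] using
    hS.sum_symmDiff_mem hbS (by omega) hsE (h₀ _ (by omega))

theorem sumsOfCardMem_add_two (hS : NClosed n S) (hbS : Set.range b ⊆ S) (hn : 2 ≤ n) {m : ℕ}
    (hm : 0 < m) (h : SumsOfCardMem b S m) : SumsOfCardMem b S (m + 2) :=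
  hS.sumsOfCardMem_of_add_eq hbS (a := 1) (d := n - 2) (by omega) (by omega) (by omega)
    (hS.sumsOfCardMem_of_add_eq hbS (a := n - 1) (d := 0) (m := m + n - 1) (by omega)
      (by omega) (by omega) h)

theorem sumsOfCardMem_of_odd (hS : NClosed n S) (hbS : Set.range b ⊆ S) (hn : 2 ≤ n) {m : ℕ}
    (hm : Odd m) : SumsOfCardMem b S m := by
  obtain ⟨k, rfl⟩ := hm
  induction k with
  | zero =>
    intro s hs
    obtain ⟨i, rfl⟩ := card_eq_one.mp hs
    simpa using hbS ⟨i, rfl⟩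
  | succ k ih => exact hS.sumsOfCardMem_add_two hbS hn (by omega) ih

theorem sumsOfCardMem (hS : NClosed n S) (hbS : Set.range b ⊆ S) (hn : 2 ≤ n) (heven : Even n)
    {m : ℕ} (hm : 0 < m) : SumsOfCardMem b S m := by
  rcases Nat.even_or_odd m with ⟨k, hk⟩ | hodd
  · obtain ⟨l, hl⟩ := heven
    exact hS.sumsOfCardMem_of_add_eq hbS (a := 0) (d := n - 1) (m₀ := m + n - 1) (by omega) hm
      (by omega) (hS.sumsOfCardMem_of_odd hbS hn ⟨k + l - 1, by omega⟩)
  · exact hS.sumsOfCardMem_of_odd hbS hn hodd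

end NClosed

end ZModTwo

/-- Let `V` be an infinite-dimensional `𝔽₂`-vector space with basis `B` and `n ≥ 2`
even. The minimal `n`-closed subset of `V` containing `B` is `V ∖ {0}`. -/
theorem nClosure_of_basis_even {V : Type*} [AddCommGroup V] [Module (ZMod 2) V]
    {ι : Type*} [Infinite ι] (b : Module.Basis ι (ZMod 2) V) (n : ℕ) (hn : 2 ≤ n)
    (heven : Even n) :
    ⋂₀ {S : Set V | Set.range b ⊆ S ∧ NClosed n S} = {v : V | v ≠ 0} := by
  classical
  refine Set.Subset.antisymm (Set.sInter_subset_of_mem ⟨?_, nClosed_setOf_ne_zero (by omega)⟩) ?_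
  · rintro _ ⟨i, rfl⟩
    exact b.ne_zero i
  · rintro v hv S ⟨hbS, hS⟩
    rw [← b.sum_support_repr v]
    refine hS.sumsOfCardMem hbS hn heven ?_ _ rfl
    rwa [card_pos, Finsupp.support_nonempty_iff, ne_eq, map_eq_zero_iff _ b.repr.injective]
end

section
/- Let V be an infinite-dimensional 𝔽₂-vector space with basis B, and let n ≥ 3 be odd. Then the minimal n-closed subset of V containing B equals the set of all sums of an odd number of elements of B. -/
/-!
Parity of the support is a linear functional `V → 𝔽₂`, so for odd `n` the vectors of odd
support form an `n`-closed set containing the basis.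

Conversely, let `S` be `n`-closed and contain the basis, and write `e_A` for the sum of the
basis vectors indexed by a finite set `A`. If `|A| ≥ n`, split off `P ⊆ A` with `|P| = n - 1`:
the basis vectors on `P` together with `e_{A \ P}` are `n` independent vectors summing to `e_A`,
so induction on `|A|` reduces to `|A| < n`. For odd `r = |A| < n` write `n = r + 2k + 2` and
take fresh pairwise disjoint `D₁, D₂, F` of sizes `k, r + k, k + 2`. The `n - 2` basis vectors
on `D₁ ∪ D₂` together with `e_{A ∪ D₁ ∪ F}` and `e_{D₂ ∪ F}` (both of size `n`) are independent
and sum to `e_A`; this is where the infinitude of the basis is needed.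
-/
open Finset Submodule

theorem ZMod.eq_one_of_ne_zero {a : ZMod 2} (h : a ≠ 0) : a = 1 := by
  revert a h; decide

theorem LinearIndependent.sumElim_of_forall_mem_span {R M ι J : Type*} [Ring R] [AddCommGroup M]
    [Module R M] [Fintype J] {v : ι → M} (hv : LinearIndependent R v) (s : Set ι) (w : J → M)
    (hw : ∀ c : J → R, ∑ j, c j • w j ∈ span R (v '' s) → c = 0) :
    LinearIndependent R (Sum.elim (fun i : s => v i) w) := by
  refine (hv.comp _ Subtype.val_injective).sum_type
    (Fintype.linearIndependent_iff.2 fun c hc => congrFun (hw c (hc ▸ zero_mem _))) ?_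
  rw [disjoint_def]
  rintro x hxs hxw
  obtain ⟨c, rfl⟩ := (mem_span_range_iff_exists_fun R).1 hxw
  rw [Set.range_comp, Subtype.range_coe] at hxs
  simp [hw c hxs]

namespace Module.Basis

section Ring

variable {ι R V : Type*} [Ring R] [AddCommGroup V] [Module R V] (b : Basis ι R V)

theorem repr_apply_eq_zero_of_mem_span_image {s : Set ι} {x : V} (hx : x ∈ span R (b '' s))
    {i : ι} (hi : i ∉ s) : b.repr x i = 0 :=
  Finsupp.notMem_support_iff.1 fun h => hi (b.mem_span_image.1 hx h)

noncomputable def finsetSum (A : Finset ι) : V := ∑ i ∈ A, b i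

variable [DecidableEq ι]

theorem repr_finsetSum_apply (A : Finset ι) (i : ι) :
    b.repr (b.finsetSum A) i = if i ∈ A then 1 else 0 := by
  simp [finsetSum, Finsupp.finsetSum_apply, Finsupp.single_apply]

theorem finsetSum_union {A B : Finset ι} (h : Disjoint A B) :
    b.finsetSum (A ∪ B) = b.finsetSum A + b.finsetSum B :=
  sum_union h

theorem finsetSum_sdiff_add {A B : Finset ι} (h : B ⊆ A) :
    b.finsetSum (A \ B) + b.finsetSum B = b.finsetSum A :=
  sum_sdiff h

end Ring

section ZModTwo

variable {ι V : Type*} [AddCommGroup V] [Module (ZMod 2) V] (b : Basis ι (ZMod 2) V)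

theorem finsetSum_support_repr [DecidableEq ι] (v : V) : b.finsetSum (b.repr v).support = v := by
  refine b.repr.injective (Finsupp.ext fun i => ?_)
  rw [repr_finsetSum_apply]
  by_cases h : b.repr v i = 0
  · simp [h]
  · simp [Finsupp.mem_support_iff.2 h, ZMod.eq_one_of_ne_zero h]

theorem constr_one_apply (v : V) :
    b.constr (ZMod 2) (fun _ => (1 : ZMod 2)) v = #(b.repr v).support := by
  rw [constr_apply, Finsupp.sum, card_eq_sum_ones, Nat.cast_sum]
  refine sum_congr rfl fun i hi => ?_
  rw [smul_eq_mul, mul_one, Nat.cast_one, ZMod.eq_one_of_ne_zero (Finsupp.mem_support_iff.1 hi)]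

theorem nClosed_setOf_odd_card_support {n : ℕ} (hn : Odd n) :
    NClosed n {v : V | Odd #(b.repr v).support} := by
  intro f hf _
  simp only [Set.mem_ofPred_eq, ← ZMod.natCast_eq_one_iff_odd, ← b.constr_one_apply,
    map_sum] at hf ⊢
  simp [hf, ZMod.natCast_eq_one_iff_odd.2 hn]

end ZModTwo

end Module.Basis

theorem Infinite.exists_card_eq_disjoint {α : Type*} [Infinite α] [DecidableEq α] (E : Finset α)
    (m : ℕ) : ∃ D : Finset α, #D = m ∧ Disjoint D E := by
  obtain ⟨T, hET, hT⟩ := Infinite.exists_superset_card_eq E (#E + m) (by omega)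
  exact ⟨T \ E, by rw [card_sdiff_of_subset hET]; omega, sdiff_disjoint⟩

namespace NClosed

variable {V ι : Type*} [AddCommGroup V] [Module (ZMod 2) V] {n : ℕ} {S : Set V}

theorem sum_mem (hS : NClosed n S) {J : Type*} [Fintype J] (hJ : Fintype.card J = n) (w : J → V)
    (hw : ∀ j, w j ∈ S) (hli : LinearIndependent (ZMod 2) w) : ∑ j, w j ∈ S := by
  let e : Fin n ≃ J := (Fintype.equivFinOfCardEq hJ).symm
  rw [← e.sum_comp]
  exact hS (w ∘ e) (fun i => hw (e i)) (hli.comp e e.injective)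

variable (b : Module.Basis ι (ZMod 2) V)

theorem finsetSum_add_sum_mem (hS : NClosed n S) (hb : Set.range b ⊆ S) (P : Finset ι)
    {J : Type*} [Fintype J] (w : J → V) (hw : ∀ j, w j ∈ S) (hcard : #P + Fintype.card J = n)
    (hind : ∀ c : J → ZMod 2, ∑ j, c j • w j ∈ span (ZMod 2) (b '' P) → c = 0) :
    b.finsetSum P + ∑ j, w j ∈ S := by
  have := hS.sum_mem (by simpa using hcard) (Sum.elim (fun i : P => b i) w)
    (Sum.forall.2 ⟨fun i => hb ⟨i, rfl⟩, hw⟩)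
    (b.linearIndependent.sumElim_of_forall_mem_span P w hind)
  simp only [Fintype.sum_sum_type, Sum.elim_inl, Sum.elim_inr, Finset.sum_coe_sort] at this
  exact this

theorem finsetSum_mem_of_card_eq (hS : NClosed n S) (hb : Set.range b ⊆ S) {A : Finset ι}
    (hA : #A = n) : b.finsetSum A ∈ S := by
  simpa using hS.finsetSum_add_sum_mem b hb A Fin.elim0 (fun j => j.elim0) (by simpa using hA)
    fun _ _ => Subsingleton.elim _ _

variable [DecidableEq ι]

theorem finsetSum_mem_of_sdiff (hS : NClosed n S) (hb : Set.range b ⊆ S) {A P : Finset ι}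
    (hPA : P ⊆ A) (hP : #P + 1 = n) {a : ι} (ha : a ∈ A \ P) (hAP : b.finsetSum (A \ P) ∈ S) :
    b.finsetSum A ∈ S := by
  have hind (c : Unit → ZMod 2) (hc : ∑ j, c j • b.finsetSum (A \ P) ∈ span (ZMod 2) (b '' P)) :
      c = 0 := by
    have := b.repr_apply_eq_zero_of_mem_span_image hc (mem_sdiff.1 ha).2
    funext j
    simpa [b.repr_finsetSum_apply, ha] using this
  have := hS.finsetSum_add_sum_mem b hb P (fun _ : Unit => b.finsetSum (A \ P)) (fun _ => hAP)
    (by simpa using hP) hind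
  rwa [Fintype.sum_unique, add_comm, b.finsetSum_sdiff_add hPA] at this

theorem finsetSum_mem_of_card_lt [Infinite ι] (hS : NClosed n S) (hb : Set.range b ⊆ S)
    (hn : Odd n) {A : Finset ι} (hA : Odd #A) (hAn : #A < n) : b.finsetSum A ∈ S := by
  obtain ⟨k, hk⟩ : ∃ k, n = #A + 2 * k + 2 := ⟨(n - #A - 2) / 2, by
    rcases hn with ⟨_, _⟩; rcases hA with ⟨_, _⟩; omega⟩
  obtain ⟨a, haA⟩ := card_pos.1 hA.pos
  obtain ⟨D₁, hD₁, hD₁A⟩ := Infinite.exists_card_eq_disjoint A k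
  obtain ⟨D₂, hD₂, hD₂AD₁⟩ := Infinite.exists_card_eq_disjoint (A ∪ D₁) (#A + k)
  obtain ⟨F, hF, hFAD⟩ := Infinite.exists_card_eq_disjoint (A ∪ D₁ ∪ D₂) (k + 2)
  obtain ⟨hD₂A, hD₂D₁⟩ := disjoint_union_right.1 hD₂AD₁
  obtain ⟨hFAD₁, hFD₂⟩ := disjoint_union_right.1 hFAD
  obtain ⟨hFA, hFD₁⟩ := disjoint_union_right.1 hFAD₁
  obtain ⟨f, hfF⟩ := card_pos.1 (by omega : 0 < #F)
  have hW₁ : b.finsetSum (A ∪ D₁ ∪ F) ∈ S := hS.finsetSum_mem_of_card_eq b hb <| by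
    rw [card_union_of_disjoint hFAD₁.symm, card_union_of_disjoint hD₁A.symm]; omega
  have hW₂ : b.finsetSum (D₂ ∪ F) ∈ S := hS.finsetSum_mem_of_card_eq b hb <| by
    rw [card_union_of_disjoint hFD₂.symm]; omega
  have := hS.finsetSum_add_sum_mem b hb (D₁ ∪ D₂)
    ![b.finsetSum (A ∪ D₁ ∪ F), b.finsetSum (D₂ ∪ F)] (Fin.forall_fin_two.2 ⟨hW₁, hW₂⟩)
    (by rw [card_union_of_disjoint hD₂D₁.symm]; simp only [Fintype.card_fin]; omega) ?_
  · simp only [Fin.sum_univ_two, Matrix.cons_val_zero, Matrix.cons_val_one] at this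
    rw [b.finsetSum_union hD₂D₁.symm, b.finsetSum_union hFAD₁.symm, b.finsetSum_union hD₁A.symm,
      b.finsetSum_union hFD₂.symm] at this
    convert this using 1
    generalize b.finsetSum A = x, b.finsetSum D₁ = y, b.finsetSum D₂ = z, b.finsetSum F = u
    rw [show y + z + (x + y + u + (z + u)) = x + (y + y) + (z + z) + (u + u) by abel]
    simp only [ZModModule.add_self, add_zero]
  · intro c hc
    have coord (i : ι) (hi : i ∉ D₁ ∪ D₂) := b.repr_apply_eq_zero_of_mem_span_image hc hi
    have haD : a ∉ D₁ ∪ D₂ := by simp [disjoint_right.1 hD₁A haA, disjoint_right.1 hD₂A haA]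
    have hfD : f ∉ D₁ ∪ D₂ := by simp [disjoint_left.1 hFD₁ hfF, disjoint_left.1 hFD₂ hfF]
    have h₀ : c 0 = 0 := by
      simpa [b.repr_finsetSum_apply, haA, disjoint_right.1 hD₂A haA, disjoint_right.1 hFA haA]
        using coord a haD
    have h₁ : c 0 + c 1 = 0 := by simpa [b.repr_finsetSum_apply, hfF] using coord f hfD
    ext j
    fin_cases j
    exacts [h₀, by simpa [h₀] using h₁]

theorem finsetSum_mem_of_odd_card [Infinite ι] (hS : NClosed n S) (hb : Set.range b ⊆ S)
    (hn : 1 < n) (hodd : Odd n) {A : Finset ι} (hA : Odd #A) : b.finsetSum A ∈ S := by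
  induction hcard : #A using Nat.strong_induction_on generalizing A with
  | _ m ih =>
    subst hcard
    rcases lt_or_ge #A n with hlt | hge
    · exact hS.finsetSum_mem_of_card_lt b hb hodd hA hlt
    obtain ⟨P, hPA, hP⟩ := exists_subset_card_eq (by omega : n - 1 ≤ #A)
    have hAP : #(A \ P) = #A - (n - 1) := by rw [card_sdiff_of_subset hPA, hP]
    obtain ⟨a, ha⟩ := card_pos.1 (by omega : 0 < #(A \ P))
    refine hS.finsetSum_mem_of_sdiff b hb hPA (by omega) ha (ih _ (by omega) ?_ rfl)
    rw [hAP, Nat.odd_iff]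
    rw [Nat.odd_iff] at hodd hA
    omega

end NClosed

/-- Let `V` be an infinite-dimensional `𝔽₂`-vector space with basis `B` and `n ≥ 3`
odd. The minimal `n`-closed subset of `V` containing `B` is the set of sums of an odd
number of elements of `B`. -/
theorem nClosure_of_basis_odd {V : Type*} [AddCommGroup V] [Module (ZMod 2) V]
    {ι : Type*} [Infinite ι] (b : Module.Basis ι (ZMod 2) V) (n : ℕ) (hn : 3 ≤ n)
    (hodd : Odd n) :
    ⋂₀ {S : Set V | Set.range b ⊆ S ∧ NClosed n S} =
      {v : V | Odd (b.repr v).support.card} := by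
  classical
  refine Set.Subset.antisymm
    (Set.sInter_subset_of_mem ⟨?_, b.nClosed_setOf_odd_card_support hodd⟩) ?_
  · rintro _ ⟨i, rfl⟩
    simp [Finsupp.support_single]
  · rintro v hv S ⟨hb, hS⟩
    simpa [b.finsetSum_support_repr] using
      hS.finsetSum_mem_of_odd_card b hb (by omega) hodd hv
end

section
/- In PGL_{n+1}(𝔽_q) acting on n-dimensional projective space over 𝔽_q, the diagonal element g_λ = diag(λ,1,…,1), where λ has multiplicative order s, acts as a permutation whose parity equals the parity of (q^n − 1)(s − 1)/s. -/
/-!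
`g_λ` is the action of the diagonal unit `Pi.mulSingle 0 λ` on `ℙ(𝔽_q^{n+1})`. It fixes `[v]`
unless `v 0 ≠ 0` and `v` is not a multiple of `e₀`; on any other point its `m`-th power acts
trivially iff `λ ^ m = 1`, so every nontrivial cycle has length `s`. The moved points are the points
`[1 : w]` with `w ≠ 0`, hence there are `q ^ n - 1` of them, and a permutation moving `N` points in
cycles of length `s` has sign `(-1) ^ ((N / s) * (s - 1))`.
-/

open Projectivization
open scoped LinearAlgebra.Projectivization
open Finset

namespace Equiv.Perm

variable {α : Type*} [Fintype α] [DecidableEq α] {f : Perm α} {s : ℕ}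

theorem eq_of_mem_cycleType_of_pow_apply_eq_self_iff
    (h : ∀ x ∈ f.support, ∀ m : ℕ, (f ^ m) x = x ↔ s ∣ m) {k : ℕ} (hk : k ∈ f.cycleType) :
    k = s := by
  rw [cycleType_def, Multiset.mem_map] at hk
  obtain ⟨c, hc, rfl⟩ := hk
  have hcycle : c.IsCycle := (mem_cycleFactorsFinset_iff.1 hc).1
  obtain ⟨x, hx⟩ := hcycle.nonempty_support
  rw [Function.comp_apply, ← hcycle.orderOf, ← Nat.dvd_right_iff_eq]
  intro m
  rw [orderOf_dvd_iff_pow_eq_one, hcycle.pow_eq_one_iff' (mem_support.1 hx),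
    cycle_is_cycleOf hx hc, cycleOf_pow_apply_self, h x (mem_cycleFactorsFinset_support_le hc hx)]

theorem sign_eq_of_forall_mem_cycleType_eq (h : ∀ k ∈ f.cycleType, k = s) :
    sign f = (-1) ^ (#f.support / s * (s - 1)) := by
  set m := Multiset.card f.cycleType
  have hrep : f.cycleType = Multiset.replicate m s := Multiset.eq_replicate_card.2 h
  have hsupp : #f.support = m * s := by
    rw [← sum_cycleType, hrep, Multiset.sum_replicate, smul_eq_mul]
  rw [sign_of_cycleType', hrep, Multiset.map_replicate, Multiset.prod_replicate, hsupp]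
  obtain hm | ⟨k, hk⟩ := Multiset.empty_or_exists_mem f.cycleType
  · simp [m, hm]
  obtain ⟨t, rfl⟩ : ∃ t, s = t + 1 :=
    ⟨s - 1, by have := two_le_of_mem_cycleType hk; grind⟩
  rw [Nat.mul_div_cancel _ t.succ_pos, Nat.add_sub_cancel, pow_succ, mul_neg_one, neg_neg,
    ← pow_mul, mul_comm]

end Equiv.Perm

-- Makes the pointwise action of `ι → Fˣ` on `ι → F` induce an action on `ℙ F (ι → F)`.
instance {ι F : Type*} [Field F] : SMulCommClass (ι → Fˣ) F (ι → F) :=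
  SMulCommClass.symm _ _ _

section
variable {F ι : Type*} [Field F] [DecidableEq ι] (i₀ : ι)

theorem Pi.mulSingle_units_smul_apply (c : Fˣ) (v : ι → F) (i : ι) :
    ((Pi.mulSingle i₀ c : ι → Fˣ) • v) i = if i = i₀ then c * v i else v i := by
  by_cases hi : i = i₀
  · subst hi; simp [Units.smul_def]
  · simp [hi]

theorem LinearEquiv.piCongrRight_smulOfUnit_apply (c : Fˣ) (v : ι → F) :
    LinearEquiv.piCongrRight (fun i => if i = i₀ then LinearEquiv.smulOfUnit (M := F) c
      else LinearEquiv.refl F F) v = (Pi.mulSingle i₀ c : ι → Fˣ) • v := by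
  funext i
  rw [Pi.mulSingle_units_smul_apply, LinearEquiv.piCongrRight_apply]
  split_ifs <;> simp [LinearEquiv.smulOfUnit, Units.smul_def]

theorem Projectivization.mulSingle_smul_mk_eq_self_iff (c : Fˣ) {v : ι → F} (hv : v ≠ 0) :
    (Pi.mulSingle i₀ c : ι → Fˣ) • mk F v hv = mk F v hv ↔
      c = 1 ∨ v i₀ = 0 ∨ ∀ i ≠ i₀, v i = 0 := by
  rw [smul_mk, mk_eq_mk_iff' F _ _ _ hv]
  constructor
  · rintro ⟨a, ha⟩
    have hcoord (i : ι) : a * v i = if i = i₀ then c * v i else v i := by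
      rw [← Pi.mulSingle_units_smul_apply, ← ha, Pi.smul_apply, smul_eq_mul]
    by_contra! ⟨hc, h0, i, hi, hvi⟩
    have ha1 : a = 1 := mul_right_cancel₀ hvi (by simpa [hi] using hcoord i)
    exact hc (Units.ext (mul_right_cancel₀ h0 (by simpa [ha1] using (hcoord i₀).symm)))
  · rintro (rfl | h0 | hrest)
    · exact ⟨1, by simp⟩
    · refine ⟨1, funext fun i => ?_⟩
      rw [Pi.mulSingle_units_smul_apply]
      split_ifs with hi <;> simp [hi, h0]
    · refine ⟨c, funext fun i => ?_⟩
      rw [Pi.mulSingle_units_smul_apply]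
      split_ifs with hi <;> simp [hi, hrest]

theorem Projectivization.mulSingle_pow_smul_eq_self_iff {c : Fˣ} {x : ℙ F (ι → F)}
    (hx : (Pi.mulSingle i₀ c : ι → Fˣ) • x ≠ x) (m : ℕ) :
    (Pi.mulSingle i₀ c : ι → Fˣ) ^ m • x = x ↔ orderOf c ∣ m := by
  induction x using ind with | h v hv =>
  rw [Ne, mulSingle_smul_mk_eq_self_iff, not_or, not_or] at hx
  obtain ⟨-, h0, hrest⟩ := hx
  rw [← Pi.mulSingle_pow, mulSingle_smul_mk_eq_self_iff, orderOf_dvd_iff_pow_eq_one]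
  simp only [h0, hrest, or_false]

end

namespace Projectivization

variable {F : Type*} [Field F] {n : ℕ}

def mkConsOne (w : Fin n → F) : ℙ F (Fin (n + 1) → F) :=
  mk F (Fin.cons 1 w) fun h => one_ne_zero (congrFun h 0)

theorem mkConsOne_injective : Function.Injective (mkConsOne : (Fin n → F) → _) := by
  intro w w' h
  obtain ⟨a, ha⟩ := (mk_eq_mk_iff' F _ _ _ _).1 h
  have ha1 : a = 1 := by simpa using congrFun ha 0
  funext j
  simpa [ha1] using (congrFun ha j.succ).symm

theorem mkConsOne_eq_mk {v : Fin (n + 1) → F} (hv : v ≠ 0) (h0 : v 0 ≠ 0) :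
    mkConsOne (fun j => v j.succ / v 0) = mk F v hv := by
  refine (mk_eq_mk_iff' F _ _ _ hv).2 ⟨(v 0)⁻¹, funext fun j => ?_⟩
  refine Fin.cases ?_ (fun j => ?_) j <;> simp [div_eq_inv_mul, h0]

theorem mulSingle_smul_mkConsOne_eq_self_iff (c : Fˣ) (w : Fin n → F) :
    (Pi.mulSingle 0 c : Fin (n + 1) → Fˣ) • mkConsOne w = mkConsOne w ↔ c = 1 ∨ w = 0 := by
  rw [mkConsOne, mulSingle_smul_mk_eq_self_iff]
  simp [Fin.forall_fin_succ, funext_iff]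

theorem card_support_toPerm_mulSingle [Fintype F] [Fintype (ℙ F (Fin (n + 1) → F))]
    [DecidableEq (ℙ F (Fin (n + 1) → F))] {c : Fˣ} (hc : c ≠ 1) :
    #(MulAction.toPerm (β := ℙ F (Fin (n + 1) → F))
        (Pi.mulSingle 0 c : Fin (n + 1) → Fˣ)).support = Fintype.card F ^ n - 1 := by
  classical
  calc _ = #((univ.erase (0 : Fin n → F)).image mkConsOne) := by
        congr 1
        ext x
        simp only [Equiv.Perm.mem_support, MulAction.toPerm_apply, mem_image, mem_erase,
          mem_univ, and_true]
        constructor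
        · induction x using ind with | h v hv =>
          intro hx
          have h0 : v 0 ≠ 0 := fun h0 =>
            hx ((mulSingle_smul_mk_eq_self_iff 0 c hv).2 (.inr (.inl h0)))
          rw [← mkConsOne_eq_mk hv h0, Ne, mulSingle_smul_mkConsOne_eq_self_iff, not_or] at hx
          exact ⟨_, hx.2, mkConsOne_eq_mk hv h0⟩
        · rintro ⟨w, hw, rfl⟩
          rw [Ne, mulSingle_smul_mkConsOne_eq_self_iff]
          tauto
    _ = Fintype.card F ^ n - 1 := by
      rw [card_image_of_injective _ mkConsOne_injective, card_erase_of_mem (mem_univ _),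
        card_univ, Fintype.card_fun, Fintype.card_fin]

end Projectivization

theorem sign_of_diagonal_projective_transformation_general
    (F : Type*) [Field F] [Fintype F] (n : ℕ) (l : Fˣ)
    [Fintype (Projectivization F (Fin (n + 1) → F))]
    [DecidableEq (Projectivization F (Fin (n + 1) → F))]
    (σ : (Fin (n + 1) → F) ≃ₗ[F] (Fin (n + 1) → F))
    (hσ : σ = LinearEquiv.piCongrRight
      (fun i => if i = 0 then LinearEquiv.smulOfUnit (M := F) l else LinearEquiv.refl F F))
    (τ : Equiv.Perm (Projectivization F (Fin (n + 1) → F)))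
    (hτ : ∀ x, τ x = Projectivization.map σ.toLinearMap σ.injective x) :
    Equiv.Perm.sign τ =
      (-1 : ℤˣ) ^ ((Fintype.card F ^ n - 1) / orderOf l * (orderOf l - 1)) := by
  have hτ_eq : τ = MulAction.toPerm (Pi.mulSingle 0 l : Fin (n + 1) → Fˣ) := by
    ext x
    induction x using ind with | h v hv =>
    rw [hτ, map_mk, MulAction.toPerm_apply, smul_mk]
    congr 1
    rw [hσ]
    exact LinearEquiv.piCongrRight_smulOfUnit_apply 0 l v
  have hperiod : ∀ x ∈ τ.support, ∀ m : ℕ, (τ ^ m) x = x ↔ orderOf l ∣ m := by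
    intro x hx m
    rw [hτ_eq, Equiv.Perm.mem_support, MulAction.toPerm_apply] at hx
    rw [hτ_eq, ← MulAction.coe_toPermHom, ← map_pow, MulAction.coe_toPermHom]
    exact mulSingle_pow_smul_eq_self_iff 0 hx m
  rw [Equiv.Perm.sign_eq_of_forall_mem_cycleType_eq fun _ =>
    Equiv.Perm.eq_of_mem_cycleType_of_pow_apply_eq_self_iff hperiod]
  obtain rfl | hl := eq_or_ne l 1
  · simp
  · rw [hτ_eq, card_support_toPerm_mulSingle hl]

/-- In `PGL_{n+1}(𝔽_q)` acting on `ℙ^n(𝔽_q)`, the diagonal element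
`g_λ = diag(λ,1,…,1)`, where `λ` has multiplicative order `s`, acts as a permutation
whose sign is `(−1)^{((q^n − 1)/s)·(s − 1)}`. -/
theorem sign_of_diagonal_projective_transformation
    (F : Type*) [Field F] [Fintype F] (n : ℕ) (hn : 1 ≤ n) (l : Fˣ)
    [Fintype (Projectivization F (Fin (n + 1) → F))]
    [DecidableEq (Projectivization F (Fin (n + 1) → F))]
    (σ : (Fin (n + 1) → F) ≃ₗ[F] (Fin (n + 1) → F))
    (hσ : σ = LinearEquiv.piCongrRight
      (fun i => if i = 0 then LinearEquiv.smulOfUnit (M := F) l else LinearEquiv.refl F F))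
    (τ : Equiv.Perm (Projectivization F (Fin (n + 1) → F)))
    (hτ : ∀ x, τ x = Projectivization.map σ.toLinearMap σ.injective x) :
    Equiv.Perm.sign τ =
      (-1 : ℤˣ) ^ ((Fintype.card F ^ n - 1) / orderOf l * (orderOf l - 1)) :=
  sign_of_diagonal_projective_transformation_general F n l σ hσ τ hτ
end

section
/- Let G be a subgroup of Sym₇ that contains a subgroup of order 168 and acts transitively on the 35 three-element subsets of a 7-element set. Then |G| is divisible by 840, so [Sym₇ : G] divides 6, and hence G is A₇ or Sym₇. -/
open Equiv.Perm Subgroup Pointwise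
open scoped Nat

/-! `|G|` is divisible by `168` (from the subgroup of order 168) and by `C(7,3) = 35` (by the
orbit–stabilizer theorem on 3-subsets), hence by `840`; since `|Sym₇| = 5040`, the index of `G`
divides `6`. A subgroup of index `m` has normal core of index dividing `m!`, so for `m < 7` the core
is a nontrivial normal subgroup of `Sym₇`, which must contain `A₇`; and the only subgroups
containing `A₇` are `A₇` and `Sym₇`. -/

theorem Subgroup.index_normalCore_dvd_factorial {G : Type*} [Group G] (H : Subgroup G)
    [H.FiniteIndex] : H.normalCore.index ∣ H.index ! := by
  rw [normalCore_eq_ker, index_ker]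
  exact (Nat.card_perm (α := G ⧸ H)) ▸ card_subgroup_dvd_card _

namespace Equiv.Perm

variable {α : Type*} [Fintype α] [DecidableEq α]

theorem alternatingGroup_le_of_index_lt_card (hα : 5 ≤ Nat.card α)
    {G : Subgroup (Perm α)} (hG : G.index < Nat.card α) :
    alternatingGroup α ≤ G := by
  have hcore : G.normalCore ≠ ⊥ := by
    intro hbot
    have hdvd := G.index_normalCore_dvd_factorial
    rw [hbot, index_bot, Nat.card_perm] at hdvd
    have hpos : 0 < G.index := Nat.pos_of_ne_zero index_ne_zero_of_finite
    exact (Nat.le_of_dvd (Nat.factorial_pos _) hdvd).not_gt ((Nat.factorial_lt hpos).2 hG)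
  exact (alternatingGroup_le_of_normal hα ((nontrivial_iff_ne_bot _).2 hcore)).trans
    (normalCore_le G)

theorem eq_alternatingGroup_or_eq_top_of_alternatingGroup_le [Nontrivial α]
    {G : Subgroup (Perm α)} (hG : alternatingGroup α ≤ G) :
    G = alternatingGroup α ∨ G = ⊤ := by
  have h2 : G.index ∣ 2 := alternatingGroup.index_eq_two (α := α) ▸ index_dvd_of_le hG
  rcases (Nat.dvd_prime Nat.prime_two).1 h2 with h | h
  · exact Or.inr (index_eq_one.1 h)
  · exact Or.inl (eq_alternatingGroup_of_index_eq_two h)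

theorem choose_dvd_card_of_forall_image_eq {G : Subgroup (Perm α)} {k : ℕ}
    (hk : k ≤ Nat.card α)
    (htrans : ∀ s t : Finset α, s.card = k → t.card = k → ∃ g ∈ G, s.image g = t) :
    (Nat.card α).choose k ∣ Nat.card G := by
  rw [Nat.card_eq_fintype_card] at hk ⊢
  obtain ⟨s, -, hs⟩ := Finset.exists_subset_card_eq (s := Finset.univ) hk
  have horbit : MulAction.orbit G s = ↑(Finset.powersetCard k (Finset.univ : Finset α)) := by
    ext t
    rw [Finset.mem_coe, Finset.mem_powersetCard, MulAction.mem_orbit_iff]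
    constructor
    · rintro ⟨g, rfl⟩
      exact ⟨Finset.subset_univ _, (Finset.card_image_of_injective s g.1.injective).trans hs⟩
    · rintro ⟨-, ht⟩
      obtain ⟨g, hg, rfl⟩ := htrans s t hs ht
      exact ⟨⟨g, hg⟩, rfl⟩
  have := MulAction.index_stabilizer G s
  rw [horbit, Set.ncard_coe_finset, Finset.card_powersetCard, Finset.card_univ] at this
  exact this ▸ index_dvd_card _

end Equiv.Perm

/-- If a subgroup `G ≤ Sym₇` contains a subgroup of order 168 and acts transitively
on the 35 three-element subsets of a 7-element set, then `840 ∣ |G|`, so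
`[Sym₇ : G] ∣ 6`, and hence `G = A₇` or `G = Sym₇`. -/
theorem subgroup_of_sym7_is_alternating_or_full
    (G : Subgroup (Equiv.Perm (Fin 7)))
    (hsub : ∃ K : Subgroup (Equiv.Perm (Fin 7)), K ≤ G ∧ Nat.card K = 168)
    (htrans : ∀ s t : Finset (Fin 7), s.card = 3 → t.card = 3 →
      ∃ g ∈ G, s.image g = t) :
    840 ∣ Nat.card G ∧ G.index ∣ 6 ∧
      (G = alternatingGroup (Fin 7) ∨ G = ⊤) := by
  obtain ⟨K, hKG, hK⟩ := hsub
  have h168 : 168 ∣ Nat.card G := hK ▸ card_dvd_of_le hKG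
  have h35 : 35 ∣ Nat.card G := by
    simpa [Nat.choose] using choose_dvd_card_of_forall_image_eq (by simp) htrans
  have h840 : 840 ∣ Nat.card G := Nat.lcm_dvd h168 h35
  have hindex : G.index ∣ 6 := by
    have h : 840 * G.index ∣ 840 * 6 := by
      have := mul_dvd_mul_right h840 G.index
      rwa [card_mul_index, Nat.card_perm, Nat.card_fin] at this
    exact Nat.dvd_of_mul_dvd_mul_left (by norm_num) h
  refine ⟨h840, hindex, eq_alternatingGroup_or_eq_top_of_alternatingGroup_le ?_⟩
  exact alternatingGroup_le_of_index_lt_card (by simp) <|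
    (Nat.le_of_dvd (by norm_num) hindex).trans_lt (by simp)
end
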